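/- arXiv:2508.14372 — 2 statements merged into one kernel-verified Lean document; each statement's English description precedes it below -/
import Mathlib

section
/- Let G be a Dehn-Sommerville q-manifold with q ≥ 1. Then every (q−1)-dimensional simplex of G is contained in exactly two q-dimensional simplices of G. Consequently the dual graph of G — whose vertices are the q-dimensional simplices of G, with two such simplices adjacent iff their intersection is a (q−1)-dimensional simplex — is (q+1)-regular. -/
/-!
Removing a vertex `v` of a ridge `x` turns the facets of `G` through `x` into the facets of the
unit sphere `S({v})` through `x \ {v}`. As `S({v})` is a Dehn–Sommerville sphere, hence a
manifold of one dimension less, this reduces the count to `q = 1`, where the unit sphere of the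
vertex `x` is a Dehn–Sommerville `0`-sphere: a set of points with `χ = 2`, i.e. exactly two points.
For regularity, `z ↦ z ∩ y` maps the neighbours of a facet `y` bijectively onto the `q + 1` ridges
of `y`, since each ridge of `y` lies in exactly one facet other than `y`.
-/

open Finset

/-- A finite abstract simplicial complex: a finite set of nonempty finite sets
closed under taking nonempty subsets. -/
def IsComplex {α : Type*} (G : Finset (Finset α)) : Prop :=
  ∀ x ∈ G, x ≠ ∅ ∧ ∀ y ⊆ x, y ≠ ∅ → y ∈ G

/-- The star U(x) = {y ∈ G : x ⊆ y}. -/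
def starOf {α : Type*} [DecidableEq α] (G : Finset (Finset α)) (x : Finset α) :
    Finset (Finset α) :=
  G.filter fun y => x ⊆ y

/-- The closed ball B(x): all (nonempty) simplices contained in some member of U(x). -/
def ballOf {α : Type*} [DecidableEq α] (G : Finset (Finset α)) (x : Finset α) :
    Finset (Finset α) :=
  G.filter fun z => ∃ y ∈ G, x ⊆ y ∧ z ⊆ y

/-- The unit sphere S(x) = B(x) \ U(x). -/
def sphereOf {α : Type*} [DecidableEq α] (G : Finset (Finset α)) (x : Finset α) :
    Finset (Finset α) :=
  ballOf G x \ starOf G x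

/-- Maximal dimension of a complex; the empty complex has dimension -1. -/
def dimC {α : Type*} (G : Finset (Finset α)) : ℤ := ((G.sup Finset.card : ℕ) : ℤ) - 1

/-- Euler characteristic χ(A) = Σ_{x∈A} (−1)^{|x|−1}. -/
def chi {α : Type*} (A : Finset (Finset α)) : ℤ := ∑ x ∈ A, (-1 : ℤ) ^ (x.card - 1)

/-- The set of vertices of a complex (elements occurring in some simplex). -/
def vertexSet {α : Type*} [DecidableEq α] (G : Finset (Finset α)) : Finset α := G.sup id

/-- Dehn-Sommerville spheres, defined inductively: the empty complex is the
Dehn-Sommerville (−1)-sphere, and a complex of maximal dimension q ≥ 0 is a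
Dehn-Sommerville q-sphere if all unit spheres are Dehn-Sommerville (q−1)-spheres
and χ(G) = 1 + (−1)^q. -/
inductive IsDSSphere {α : Type*} [DecidableEq α] : ℤ → Finset (Finset α) → Prop
  | empty : IsDSSphere (-1) (∅ : Finset (Finset α))
  | step (q : ℕ) (G : Finset (Finset α)) (hC : IsComplex G) (hq : dimC G = q)
      (hS : ∀ x ∈ G, IsDSSphere ((q : ℤ) - 1) (sphereOf G x))
      (hχ : chi G = 1 + (-1) ^ q) : IsDSSphere q G

/-- A Dehn-Sommerville q-manifold: a complex of maximal dimension q all of whose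
unit spheres are Dehn-Sommerville (q−1)-spheres. -/
def IsDSManifold {α : Type*} [DecidableEq α] (q : ℤ) (G : Finset (Finset α)) : Prop :=
  IsComplex G ∧ dimC G = q ∧ ∀ x ∈ G, IsDSSphere (q - 1) (sphereOf G x)

section

variable {α : Type*}

lemma IsComplex.mem_of_subset {G : Finset (Finset α)} (hC : IsComplex G) {x y : Finset α}
    (hx : x ∈ G) (hyx : y ⊆ x) (hy : y.Nonempty) : y ∈ G :=
  (hC x hx).2 y hyx hy.ne_empty

lemma IsComplex.card_eq_one_of_dimC_eq_zero {G : Finset (Finset α)} (hC : IsComplex G)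
    (hd : dimC G = 0) {z : Finset α} (hz : z ∈ G) : z.card = 1 := by
  have hle : z.card ≤ G.sup card := le_sup (f := card) hz
  have hpos : 0 < z.card := card_pos.2 (nonempty_iff_ne_empty.2 (hC z hz).1)
  unfold dimC at hd
  omega

lemma IsComplex.singleton_mem {G : Finset (Finset α)} (hC : IsComplex G) {x : Finset α}
    {v : α} (hx : x ∈ G) (hv : v ∈ x) : {v} ∈ G :=
  hC.mem_of_subset hx (singleton_subset_iff.2 hv) (singleton_nonempty v)

lemma inter_eq_of_subset_of_card_eq_succ [DecidableEq α] {x y z : Finset α} {q : ℕ}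
    (hxz : x ⊆ z) (hxy : x ⊆ y) (hzy : z ≠ y) (hxc : x.card = q) (hyc : y.card = q + 1)
    (hzc : z.card = q + 1) : z ∩ y = x := by
  have hne : z ∩ y ≠ y := fun h =>
    hzy (eq_of_subset_of_card_le (h ▸ inter_subset_left : y ⊆ z) (by omega)).symm
  have hlt : (z ∩ y).card < y.card :=
    card_lt_card (inter_subset_right.ssubset_of_ne hne)
  exact (eq_of_subset_of_card_le (subset_inter hxz hxy) (by omega)).symm

section DecidableEq

variable [DecidableEq α]

def cofaces (G : Finset (Finset α)) (k : ℕ) (x : Finset α) : Finset (Finset α) :=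
  G.filter fun y => y.card = k ∧ x ⊆ y

lemma mem_cofaces {G : Finset (Finset α)} {k : ℕ} {x y : Finset α} :
    y ∈ cofaces G k x ↔ y ∈ G ∧ y.card = k ∧ x ⊆ y :=
  mem_filter

lemma IsComplex.mem_sphereOf_singleton {G : Finset (Finset α)} (hC : IsComplex G)
    {v : α} {z : Finset α} :
    z ∈ sphereOf G {v} ↔ z ∈ G ∧ v ∉ z ∧ insert v z ∈ G := by
  simp only [sphereOf, ballOf, starOf, mem_sdiff, mem_filter, singleton_subset_iff]
  constructor
  · rintro ⟨⟨hzG, w, hwG, hvw, hzw⟩, hvz⟩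
    exact ⟨hzG, fun h => hvz ⟨hzG, h⟩,
      hC.mem_of_subset hwG (insert_subset hvw hzw) (insert_nonempty v z)⟩
  · rintro ⟨hzG, hvz, hvzG⟩
    exact ⟨⟨hzG, insert v z, hvzG, mem_insert_self v z, subset_insert v z⟩, fun h => hvz h.2⟩

lemma IsComplex.erase_mem_sphereOf_singleton {G : Finset (Finset α)} (hC : IsComplex G)
    {x : Finset α} {v : α} (hx : x ∈ G) (hv : v ∈ x) (hne : (x.erase v).Nonempty) :
    x.erase v ∈ sphereOf G {v} := by
  refine hC.mem_sphereOf_singleton.2 ⟨hC.mem_of_subset hx (erase_subset v x) hne,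
    notMem_erase v x, ?_⟩
  rwa [insert_erase hv]

/-- Stated from `k + 2` on: for `y = {v}`, the set `y \ {v} = ∅` is not a simplex. -/
lemma IsComplex.card_cofaces_eq_card_cofaces_sphereOf {G : Finset (Finset α)}
    (hC : IsComplex G) {x : Finset α} {v : α} (hv : v ∈ x) (k : ℕ) :
    (cofaces G (k + 2) x).card = (cofaces (sphereOf G {v}) (k + 1) (x.erase v)).card := by
  apply card_nbij' (fun y => y.erase v) (insert v)
  · intro y hy
    obtain ⟨hyG, hyc, hxy⟩ := mem_cofaces.1 hy
    have hvy : v ∈ y := hxy hv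
    have hyec : (y.erase v).card = k + 1 := by rw [card_erase_of_mem hvy, hyc]; rfl
    exact mem_cofaces.2 ⟨hC.erase_mem_sphereOf_singleton hyG hvy (card_pos.1 (by omega)), hyec,
      erase_subset_erase v hxy⟩
  · intro z hz
    obtain ⟨hzS, hzc, hxz⟩ := mem_cofaces.1 hz
    obtain ⟨-, hvz, hvzG⟩ := hC.mem_sphereOf_singleton.1 hzS
    refine mem_cofaces.2 ⟨hvzG, by rw [card_insert_of_notMem hvz, hzc], ?_⟩
    rw [← insert_erase hv]
    exact insert_subset_insert v hxz
  · intro y hy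
    exact insert_erase ((mem_cofaces.1 hy).2.2 hv)
  · intro z hz
    exact erase_insert (hC.mem_sphereOf_singleton.1 (mem_cofaces.1 hz).1).2.1

lemma IsDSSphere.isDSManifold {n : ℤ} {S : Finset (Finset α)} (h : IsDSSphere n S) :
    IsDSManifold n S := by
  cases h with
  | empty => exact ⟨by simp [IsComplex], rfl, by simp⟩
  | step q S hC hq hS _ => exact ⟨hC, hq, hS⟩

lemma IsDSSphere.chi_eq {n : ℕ} {S : Finset (Finset α)} (h : IsDSSphere (n : ℤ) S) :
    chi S = 1 + (-1) ^ n := by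
  cases h with
  | step _ _ _ _ _ hχ => exact hχ

lemma IsDSSphere.card_eq_two_of_zero {S : Finset (Finset α)} (h : IsDSSphere 0 S) :
    S.card = 2 := by
  obtain ⟨hC, hd, -⟩ := h.isDSManifold
  have hχ : chi S = 2 := by simpa using IsDSSphere.chi_eq (n := 0) h
  have hχcard : chi S = S.card := by
    unfold chi
    rw [sum_congr rfl fun z hz => by rw [hC.card_eq_one_of_dimC_eq_zero hd hz]]
    simp
  omega

lemma IsDSManifold.isDSSphere_sphereOf_singleton {k : ℕ} {G : Finset (Finset α)}
    (hG : IsDSManifold ((k + 1 : ℕ) : ℤ) G) {v : α} (hv : {v} ∈ G) :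
    IsDSSphere (k : ℤ) (sphereOf G {v}) := by
  simpa using hG.2.2 {v} hv

theorem IsDSManifold.card_cofaces_eq_two {k : ℕ} {G : Finset (Finset α)}
    (hG : IsDSManifold ((k + 1 : ℕ) : ℤ) G) {x : Finset α} (hx : x ∈ G) (hxc : x.card = k + 1) :
    (cofaces G (k + 2) x).card = 2 := by
  induction k using Nat.strong_induction_on generalizing G x with
  | _ k ih =>
    obtain ⟨v, hv⟩ : x.Nonempty := card_pos.1 (by omega)
    have hS := hG.isDSSphere_sphereOf_singleton (hG.1.singleton_mem hx hv)
    have hxec : (x.erase v).card = k := by rw [card_erase_of_mem hv, hxc]; rfl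
    rw [hG.1.card_cofaces_eq_card_cofaces_sphereOf hv]
    rcases k with _ | k
    · have hpoints : cofaces (sphereOf G {v}) 1 (x.erase v) = sphereOf G {v} := by
        obtain ⟨hSC, hSd, -⟩ := hS.isDSManifold
        refine filter_true_of_mem fun z hz => ⟨hSC.card_eq_one_of_dimC_eq_zero hSd hz, ?_⟩
        rw [card_eq_zero.1 hxec]
        exact empty_subset z
      rw [hpoints]
      exact hS.card_eq_two_of_zero
    · exact ih k k.lt_succ_self hS.isDSManifold
        (hG.1.erase_mem_sphereOf_singleton hx hv (card_pos.1 (by omega))) hxec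

lemma IsComplex.card_dual_neighbors {G : Finset (Finset α)} (hC : IsComplex G) {q : ℕ}
    (hq : 1 ≤ q) (hridge : ∀ x ∈ G, x.card = q → (cofaces G (q + 1) x).card = 2)
    {y : Finset α} (hy : y ∈ G) (hyc : y.card = q + 1) :
    (G.filter fun z => z.card = q + 1 ∧ z ≠ y ∧ (z ∩ y).card = q).card = q + 1 := by
  have hother : ∀ x ∈ powersetCard q y, ∃ z, (cofaces G (q + 1) x).erase y = {z} := by
    intro x hx
    obtain ⟨hxy, hxc⟩ := mem_powersetCard.1 hx
    have hxG : x ∈ G := hC.mem_of_subset hy hxy (card_pos.1 (by omega))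
    rw [← card_eq_one, card_erase_of_mem (mem_cofaces.2 ⟨hy, hyc, hxy⟩), hridge x hxG hxc]
  have hridges : (powersetCard q y).card = q + 1 := by
    rw [card_powersetCard, hyc, Nat.choose_succ_self_right]
  refine (card_nbij (· ∩ y) ?_ ?_ ?_).trans hridges
  · intro z hz
    exact mem_powersetCard.2 ⟨inter_subset_right, (mem_filter.1 hz).2.2.2⟩
  · intro z₁ hz₁ z₂ hz₂ (h : z₁ ∩ y = z₂ ∩ y)
    obtain ⟨hz₁G, hz₁c, hz₁y, hz₁i⟩ := mem_filter.1 hz₁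
    obtain ⟨hz₂G, hz₂c, hz₂y, -⟩ := mem_filter.1 hz₂
    obtain ⟨z, hz⟩ := hother (z₁ ∩ y) (mem_powersetCard.2 ⟨inter_subset_right, hz₁i⟩)
    have h₁ : z₁ ∈ (cofaces G (q + 1) (z₁ ∩ y)).erase y :=
      mem_erase.2 ⟨hz₁y, mem_cofaces.2 ⟨hz₁G, hz₁c, inter_subset_left⟩⟩
    have h₂ : z₂ ∈ (cofaces G (q + 1) (z₁ ∩ y)).erase y :=
      mem_erase.2 ⟨hz₂y, mem_cofaces.2 ⟨hz₂G, hz₂c, h ▸ inter_subset_left⟩⟩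
    rw [hz, mem_singleton] at h₁ h₂
    rw [h₁, h₂]
  · intro x hx
    obtain ⟨hxy, hxc⟩ := mem_powersetCard.1 hx
    obtain ⟨z, hz⟩ := hother x hx
    have hzmem : z ∈ (cofaces G (q + 1) x).erase y := hz ▸ mem_singleton_self z
    obtain ⟨hzy, hzG, hzc, hxz⟩ : z ≠ y ∧ z ∈ G ∧ z.card = q + 1 ∧ x ⊆ z := by
      simpa only [mem_erase, mem_cofaces] using hzmem
    have hzx := inter_eq_of_subset_of_card_eq_succ hxz hxy hzy hxc hyc hzc
    exact ⟨z, mem_filter.2 ⟨hzG, hzc, hzy, hzx ▸ hxc⟩, hzx⟩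

end DecidableEq

end

/-- in a Dehn-Sommerville q-manifold with q ≥ 1, every
(q−1)-dimensional simplex is contained in exactly two q-dimensional simplices;
consequently the dual graph is (q+1)-regular. -/
theorem wall_in_two_facets_and_dual_regular {α : Type*} [DecidableEq α]
    (q : ℕ) (hq : 1 ≤ q) (G : Finset (Finset α)) (hG : IsDSManifold (q : ℤ) G) :
    (∀ x ∈ G, x.card = q →
      (G.filter fun y => y.card = q + 1 ∧ x ⊆ y).card = 2) ∧
    (∀ y ∈ G, y.card = q + 1 →
      (G.filter fun z => z.card = q + 1 ∧ z ≠ y ∧ (z ∩ y).card = q).card = q + 1) := by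
  have hridge : ∀ x ∈ G, x.card = q → (cofaces G (q + 1) x).card = 2 := by
    obtain ⟨k, rfl⟩ : ∃ k, q = k + 1 := ⟨q - 1, by omega⟩
    exact fun x hx hxc => hG.card_cofaces_eq_two hx hxc
  exact ⟨hridge, fun y hy hyc => hG.1.card_dual_neighbors hq hridge hy hyc⟩
end

section
/- Let G be a finite abstract simplicial complex, let x ∈ G, and let m ≥ 1 be an integer. Then w_m(B(x)) = w_m(U(x)) − (−1)^m w_m(S(x)), where B(x) is the closed ball, U(x) the star and S(x) the unit sphere of x (local boundary formula). -/
open Finset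

/-- The m-th characteristic w_m(A) = Σ_{(x_1,…,x_m) ∈ A^m, x_1 ∩ ⋯ ∩ x_m ∈ A}
Π_j (−1)^{|x_j|−1} (defined as 0 for m = 0). -/
def wChar {α : Type*} [DecidableEq α] (m : ℕ) (A : Finset (Finset α)) : ℤ :=
  match m with
  | 0 => 0
  | n + 1 =>
    ∑ x ∈ Fintype.piFinset fun _ : Fin (n + 1) => A,
      if Finset.univ.inf' Finset.univ_nonempty x ∈ A then
        ∏ j, (-1 : ℤ) ^ ((x j).card - 1)
      else 0

/-! Writing `χ_A(w)` for the Euler characteristic of the star of `w` in `A`, inclusion–exclusion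
over the nonempty subsets of `x₁ ∩ ⋯ ∩ xₘ` gives, for any family `A` of nonempty sets closed
under nonempty intersections, `w_m(A) = -∑_{w ≠ ∅} (-1)^|w| χ_A(w)^m`. The ball is the disjoint
union of the star and the sphere, so `χ_B(w) = χ_U(w) + χ_S(w)`. If `x ⊆ w` then `χ_S(w) = 0`;
otherwise, for a vertex `p ∈ x \ w`, toggling `p` is a sign-reversing involution on the star of
`w` in `B`, so `χ_B(w) = 0` and `χ_U(w) = -χ_S(w)`. In both cases
`χ_B(w)^m = χ_U(w)^m - (-1)^m χ_S(w)^m`, which is the formula term by term. -/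

section

variable {α : Type*}

namespace IsComplex

variable {G : Finset (Finset α)}

lemma empty_notMem (hC : IsComplex G) : ∅ ∉ G := fun h => (hC ∅ h).1 rfl

lemma mem_of_subset_s18 (hC : IsComplex G) {y z : Finset α} (hy : y ∈ G) (hzy : z ⊆ y)
    (hz : z ≠ ∅) : z ∈ G :=
  (hC y hy).2 z hzy hz

end IsComplex

variable [DecidableEq α]

lemma chi_eq_zero_of_insert_erase_mem {A : Finset (Finset α)} (p : α) (hA : ∅ ∉ A)
    (hins : ∀ z ∈ A, insert p z ∈ A) (herase : ∀ z ∈ A, z.erase p ∈ A) : chi A = 0 := by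
  have hcard : ∀ z ∈ A, #z ≠ 0 := fun z hz h => hA (card_eq_zero.1 h ▸ hz)
  have hcancel : ∀ {k : ℕ}, k ≠ 0 → (-1 : ℤ) ^ (k - 1) + (-1) ^ (k + 1 - 1) = 0 := by
    rintro (_ | k) hk
    · exact absurd rfl hk
    · simp [pow_succ]
  refine sum_involution (fun z _ => if p ∈ z then z.erase p else insert p z) (fun z hz => ?_)
    (fun z _ _ => ?_) (fun z hz => ?_) (fun z _ => ?_)
  · by_cases hp : p ∈ z
    · rw [if_pos hp, ← card_erase_add_one hp, add_comm]
      exact hcancel (hcard _ (herase z hz))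
    · rw [if_neg hp, card_insert_of_notMem hp]
      exact hcancel (hcard z hz)
  · split_ifs with hp
    · exact erase_ne_self.2 hp
    · exact insert_ne_self.2 hp
  · split_ifs
    · exact herase z hz
    · exact hins z hz
  · by_cases hp : p ∈ z <;> simp [hp]

lemma sum_erase_empty_powerset_neg_one_pow_card {V u : Finset α} (hu : u ⊆ V) :
    ∑ w ∈ V.powerset.erase ∅ with w ⊆ u, (-1 : ℤ) ^ #w = if u = ∅ then 0 else -1 := by
  have hfilter : {w ∈ V.powerset.erase ∅ | w ⊆ u} = u.powerset.erase ∅ := by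
    ext w
    simp only [mem_filter, mem_erase, mem_powerset]
    exact ⟨fun h => ⟨h.1.1, h.2⟩, fun h => ⟨⟨h.1, h.2.trans hu⟩, h.2⟩⟩
  have hsplit := add_sum_erase _ (fun w => (-1 : ℤ) ^ #w) (empty_mem_powerset u)
  rw [sum_powerset_neg_one_pow_card] at hsplit
  rw [hfilter]
  split_ifs at hsplit ⊢ <;> simp only [card_empty, pow_zero] at hsplit <;> linarith

lemma inf'_mem_iff_ne_empty {A : Finset (Finset α)} (hA : ∅ ∉ A)
    (hinter : ∀ a ∈ A, ∀ b ∈ A, a ∩ b ≠ ∅ → a ∩ b ∈ A) {n : ℕ}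
    {z : Fin (n + 1) → Finset α} (hz : ∀ j, z j ∈ A) :
    univ.inf' univ_nonempty z ∈ A ↔ univ.inf' univ_nonempty z ≠ ∅ := by
  refine ⟨fun h he => hA (he ▸ h), ?_⟩
  refine inf'_induction _ _ (p := fun c => c ≠ ∅ → c ∈ A) (fun a ha b hb hab => ?_)
    (fun j _ _ => hz j)
  have hne : ∀ {c : Finset α}, a ∩ b ⊆ c → c ≠ ∅ := fun h hc =>
    hab (subset_empty.1 (hc ▸ h))
  exact hinter a (ha (hne inter_subset_left)) b (hb (hne inter_subset_right)) hab

lemma chi_starOf_pow (A : Finset (Finset α)) (w : Finset α) (n : ℕ) :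
    chi (starOf A w) ^ n = ∑ z ∈ Fintype.piFinset fun _ : Fin n => A,
      if ∀ j, w ⊆ z j then ∏ j, (-1 : ℤ) ^ (#(z j) - 1) else 0 := by
  rw [chi, starOf, sum_filter, sum_pow']
  exact sum_congr rfl fun z _ => by convert Fintype.prod_ite_zero

theorem wChar_succ_eq_neg_sum_chi_starOf {A : Finset (Finset α)} {V : Finset α}
    (hAV : ∀ a ∈ A, a ⊆ V) (hA : ∅ ∉ A)
    (hinter : ∀ a ∈ A, ∀ b ∈ A, a ∩ b ≠ ∅ → a ∩ b ∈ A) (n : ℕ) :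
    wChar (n + 1) A
      = -∑ w ∈ V.powerset.erase ∅, (-1) ^ #w * chi (starOf A w) ^ (n + 1) := by
  have hterm : ∀ z ∈ Fintype.piFinset fun _ : Fin (n + 1) => A,
      (if univ.inf' univ_nonempty z ∈ A then ∏ j, (-1 : ℤ) ^ (#(z j) - 1) else 0)
        = -∑ w ∈ V.powerset.erase ∅,
            (-1) ^ #w * if ∀ j, w ⊆ z j then ∏ j, (-1 : ℤ) ^ (#(z j) - 1) else 0 := by
    intro z hz
    have hz := Fintype.mem_piFinset.1 hz
    have hinfV : univ.inf' univ_nonempty z ⊆ V := (inf'_le _ (mem_univ 0)).trans (hAV _ (hz 0))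
    have hsub : ∀ w, (∀ j, w ⊆ z j) ↔ w ⊆ univ.inf' univ_nonempty z := fun w => by
      simp [le_inf'_iff]
    simp only [hsub, mul_ite, mul_zero]
    rw [← sum_filter, ← sum_mul, sum_erase_empty_powerset_neg_one_pow_card hinfV,
      if_congr (inf'_mem_iff_ne_empty hA hinter hz) rfl rfl]
    by_cases h : univ.inf' univ_nonempty z = ∅ <;> simp [h]
  rw [wChar, sum_congr rfl hterm, sum_neg_distrib, sum_comm]
  simp only [mul_sum, chi_starOf_pow]

lemma starOf_sdiff (A B : Finset (Finset α)) (w : Finset α) :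
    starOf (B \ A) w = starOf B w \ starOf A w := by
  ext z
  simp only [starOf, mem_filter, mem_sdiff]
  tauto

lemma chi_starOf_sdiff_add {A B : Finset (Finset α)} (hAB : A ⊆ B) (w : Finset α) :
    chi (starOf (B \ A) w) + chi (starOf A w) = chi (starOf B w) := by
  rw [starOf_sdiff]
  exact sum_sdiff (filter_subset_filter _ hAB)

variable {G : Finset (Finset α)} {x : Finset α}

lemma starOf_subset : starOf G x ⊆ G := filter_subset _ _

lemma ballOf_subset : ballOf G x ⊆ G := filter_subset _ _

lemma sphereOf_subset : sphereOf G x ⊆ G := sdiff_subset.trans ballOf_subset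

lemma IsComplex.inter_mem (hC : IsComplex G) {a b : Finset α} (ha : a ∈ G) (hab : a ∩ b ≠ ∅) :
    a ∩ b ∈ G :=
  hC.mem_of_subset_s18 ha inter_subset_left hab

lemma IsComplex.inter_mem_starOf (hC : IsComplex G) {a b : Finset α} (ha : a ∈ starOf G x)
    (hb : b ∈ starOf G x) (hab : a ∩ b ≠ ∅) : a ∩ b ∈ starOf G x := by
  simp only [starOf, mem_filter] at ha hb ⊢
  exact ⟨hC.inter_mem ha.1 hab, subset_inter ha.2 hb.2⟩

lemma isComplex_ballOf (hC : IsComplex G) : IsComplex (ballOf G x) := by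
  intro z hz
  obtain ⟨hzG, y, hyG, hxy, hzy⟩ := mem_filter.1 hz
  refine ⟨(hC z hzG).1, fun u huz hu => mem_filter.2 ?_⟩
  exact ⟨hC.mem_of_subset_s18 hzG huz hu, y, hyG, hxy, huz.trans hzy⟩

lemma isComplex_sphereOf (hC : IsComplex G) : IsComplex (sphereOf G x) := by
  intro z hz
  obtain ⟨hzB, hzU⟩ := mem_sdiff.1 hz
  have hB := isComplex_ballOf (x := x) hC
  refine ⟨(hB z hzB).1, fun u huz hu => mem_sdiff.2 ⟨hB.mem_of_subset_s18 hzB huz hu, ?_⟩⟩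
  simp only [starOf, mem_filter] at hzU ⊢
  exact fun hxu => hzU ⟨(mem_filter.1 hzB).1, hxu.2.trans huz⟩

lemma starOf_subset_ballOf : starOf G x ⊆ ballOf G x := fun z hz =>
  mem_filter.2 ⟨(mem_filter.1 hz).1, z, (mem_filter.1 hz).1, (mem_filter.1 hz).2, subset_rfl⟩

lemma starOf_sphereOf_eq_empty {w : Finset α} (hxw : x ⊆ w) : starOf (sphereOf G x) w = ∅ := by
  refine filter_eq_empty_iff.2 fun z hz hwz => (mem_sdiff.1 hz).2 ?_
  exact mem_filter.2 ⟨(mem_filter.1 (mem_sdiff.1 hz).1).1, hxw.trans hwz⟩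

lemma chi_starOf_ballOf_eq_zero (hC : IsComplex G) {w : Finset α} (hw : w ≠ ∅)
    (hxw : ¬x ⊆ w) : chi (starOf (ballOf G x) w) = 0 := by
  obtain ⟨p, hpx, hpw⟩ := not_subset.1 hxw
  refine chi_eq_zero_of_insert_erase_mem p
    (fun h => hC.empty_notMem (ballOf_subset (starOf_subset h))) (fun z hz => ?_) (fun z hz => ?_)
  · obtain ⟨hzB, hwz⟩ := mem_filter.1 hz
    obtain ⟨hzG, y, hyG, hxy, hzy⟩ := mem_filter.1 hzB
    have hpz : insert p z ⊆ y := insert_subset (hxy hpx) hzy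
    refine mem_filter.2 ⟨mem_filter.2 ⟨?_, y, hyG, hxy, hpz⟩, hwz.trans (subset_insert p z)⟩
    exact hC.mem_of_subset_s18 hyG hpz (insert_ne_empty p z)
  · obtain ⟨hzB, hwz⟩ := mem_filter.1 hz
    obtain ⟨hzG, y, hyG, hxy, hzy⟩ := mem_filter.1 hzB
    have hwpz : w ⊆ z.erase p := subset_erase.2 ⟨hwz, hpw⟩
    have hpz : z.erase p ⊆ y := (erase_subset p z).trans hzy
    refine mem_filter.2 ⟨mem_filter.2 ⟨?_, y, hyG, hxy, hpz⟩, hwpz⟩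
    exact hC.mem_of_subset_s18 hzG (erase_subset p z) fun h => hw (subset_empty.1 (h ▸ hwpz))

lemma chi_starOf_ballOf_pow (hC : IsComplex G) {w : Finset α} (hw : w ≠ ∅) {k : ℕ}
    (hk : k ≠ 0) : chi (starOf (ballOf G x) w) ^ k
      = chi (starOf (starOf G x) w) ^ k - (-1) ^ k * chi (starOf (sphereOf G x) w) ^ k := by
  have hsplit := chi_starOf_sdiff_add (starOf_subset_ballOf (G := G) (x := x)) w
  rw [← sphereOf] at hsplit
  by_cases hxw : x ⊆ w
  · rw [starOf_sphereOf_eq_empty hxw] at hsplit ⊢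
    rw [← hsplit]
    simp [chi, zero_pow hk]
  · rw [chi_starOf_ballOf_eq_zero hC hw hxw] at hsplit ⊢
    rw [eq_neg_of_add_eq_zero_right hsplit, neg_pow, zero_pow hk]
    ring

lemma subset_vertexSet {a : Finset α} (ha : a ∈ G) : a ⊆ vertexSet G :=
  le_sup (f := id) ha

lemma IsComplex.wChar_succ_eq {A : Finset (Finset α)} (hA : IsComplex A) {V : Finset α}
    (hAV : ∀ a ∈ A, a ⊆ V) (n : ℕ) :
    wChar (n + 1) A
      = -∑ w ∈ V.powerset.erase ∅, (-1) ^ #w * chi (starOf A w) ^ (n + 1) :=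
  wChar_succ_eq_neg_sum_chi_starOf hAV hA.empty_notMem (fun _ ha _ _ => hA.inter_mem ha) n

end

theorem local_boundary_formula_general {α : Type*} [DecidableEq α]
    (G : Finset (Finset α)) (hC : IsComplex G) (x : Finset α)
    (m : ℕ) (hm : 1 ≤ m) :
    wChar m (ballOf G x)
      = wChar m (starOf G x) - (-1) ^ m * wChar m (sphereOf G x) := by
  obtain ⟨n, rfl⟩ := Nat.exists_eq_add_of_le' hm
  have hV : ∀ A ⊆ G, ∀ a ∈ A, a ⊆ vertexSet G := fun A hA a ha => subset_vertexSet (hA ha)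
  rw [(isComplex_ballOf hC).wChar_succ_eq (hV _ ballOf_subset),
    (isComplex_sphereOf hC).wChar_succ_eq (hV _ sphereOf_subset),
    wChar_succ_eq_neg_sum_chi_starOf (hV _ starOf_subset)
      (fun h => hC.empty_notMem (starOf_subset h)) (fun _ ha _ hb => hC.inter_mem_starOf ha hb)]
  rw [sum_congr rfl fun w hw => by
    rw [chi_starOf_ballOf_pow hC (ne_of_mem_erase hw) n.succ_ne_zero]]
  simp only [mul_sub, sum_sub_distrib, mul_left_comm _ ((-1 : ℤ) ^ (n + 1)), ← mul_sum]
  ring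

/-- the local boundary formula
w_m(B(x)) = w_m(U(x)) − (−1)^m w_m(S(x)) for every simplicial complex G,
x ∈ G and m ≥ 1. -/
theorem local_boundary_formula {α : Type*} [DecidableEq α]
    (G : Finset (Finset α)) (hC : IsComplex G) (x : Finset α) (hx : x ∈ G)
    (m : ℕ) (hm : 1 ≤ m) :
    wChar m (ballOf G x)
      = wChar m (starOf G x) - (-1) ^ m * wChar m (sphereOf G x) :=
  local_boundary_formula_general G hC x m hm
end
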